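/- Let K₁, K₂ : ℝ → ℝ² be continuous injective maps and suppose there exists R > 0 such that K₁(t) = (t,0) and K₂(t) = (t,0) whenever |t| ≥ R. Then the concatenation K₁#K₂ : ℝ → ℝ² is a closed topological embedding of ℝ into ℝ². -/

import Mathlib

/-- The map `f_L(x,y) = (-e^{-x}, y)`. -/
noncomputable def fL (p : ℝ × ℝ) : ℝ × ℝ := (-Real.exp (-p.1), p.2)

/-- The map `f_R(x,y) = (e^{x}, y)`. -/
noncomputable def fR (p : ℝ × ℝ) : ℝ × ℝ := (Real.exp p.1, p.2)

/-- The concatenation `K₁ # K₂` of two long maps `ℝ → ℝ²`. -/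
noncomputable def concat (K₁ K₂ : ℝ → ℝ × ℝ) (t : ℝ) : ℝ × ℝ :=
  if t < 0 then fL (K₁ (-Real.log (-t)))
  else if t = 0 then (0, 0)
  else fR (K₂ (Real.log t))

/-!
Away from `0` the concatenation is a reparametrisation of `fL ∘ K₁` or `fR ∘ K₂`, so it is
continuous and injective there, and the sign of its first coordinate tells the two halves
apart. Since `fL` and `fR` map the `x`-axis onto the negative and positive `x`-axis, `K₁ # K₂`
is the straight line `t ↦ (t, 0)` wherever `|log |t||` is large: on a punctured neighbourhood
of `0`, which gives continuity at `0`, and outside a compact set, which makes the map proper.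
A proper continuous injection is a closed embedding.
-/

open Real Filter Topology

lemma continuous_fL : Continuous fL := by unfold fL; fun_prop

lemma continuous_fR : Continuous fR := by unfold fR; fun_prop

lemma fL_injective : Function.Injective fL := fun p q h => by
  simp only [fL, Prod.mk.injEq, neg_inj, exp_eq_exp] at h
  exact Prod.ext h.1 h.2

lemma fR_injective : Function.Injective fR := fun p q h => by
  simp only [fR, Prod.mk.injEq, exp_eq_exp] at h
  exact Prod.ext h.1 h.2

section

variable {K₁ K₂ : ℝ → ℝ × ℝ} {t : ℝ}

lemma concat_of_neg (ht : t < 0) : concat K₁ K₂ t = fL (K₁ (-log (-t))) := if_pos ht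

@[simp]
lemma concat_zero : concat K₁ K₂ 0 = (0, 0) := by simp [concat]

lemma concat_of_pos (ht : 0 < t) : concat K₁ K₂ t = fR (K₂ (log t)) := by
  rw [concat, if_neg ht.not_gt, if_neg ht.ne']

lemma sign_concat_fst (t : ℝ) : SignType.sign (concat K₁ K₂ t).1 = SignType.sign t := by
  rcases lt_trichotomy t 0 with ht | rfl | ht
  · rw [concat_of_neg ht, sign_neg ht, sign_neg (by simp [fL, exp_pos])]
  · simp
  · rw [concat_of_pos ht, sign_pos ht, sign_pos (by simp [fR, exp_pos])]

lemma concat_injective (hi₁ : Function.Injective K₁) (hi₂ : Function.Injective K₂) :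
    Function.Injective (concat K₁ K₂) := by
  intro a b h
  have hsign : SignType.sign a = SignType.sign b := by
    rw [← sign_concat_fst (K₁ := K₁) (K₂ := K₂), h, sign_concat_fst]
  rcases lt_trichotomy a 0 with ha | rfl | ha
  · have hb : b < 0 := by rwa [sign_neg ha, eq_comm, sign_eq_neg_one_iff] at hsign
    rw [concat_of_neg ha, concat_of_neg hb] at h
    exact neg_injective <| log_injOn_pos (neg_pos.2 ha) (neg_pos.2 hb) <|
      neg_injective <| hi₁ <| fL_injective h
  · exact (sign_eq_zero_iff.1 (hsign.symm.trans sign_zero)).symm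
  · have hb : 0 < b := by rwa [sign_pos ha, eq_comm, sign_eq_one_iff] at hsign
    rw [concat_of_pos ha, concat_of_pos hb] at h
    exact log_injOn_pos ha hb <| hi₂ <| fR_injective h

lemma continuousAt_concat_of_neg (hc₁ : Continuous K₁) (ht : t < 0) :
    ContinuousAt (concat K₁ K₂) t := by
  have hbranch : ContinuousAt (fun s => fL (K₁ (-log (-s)))) t :=
    continuous_fL.continuousAt.comp <| hc₁.continuousAt.comp <|
      ((continuousAt_log (neg_ne_zero.2 ht.ne)).comp continuous_neg.continuousAt).neg
  exact hbranch.congr <| (eventually_lt_nhds ht).mono fun _ hs => (concat_of_neg hs).symm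

lemma continuousAt_concat_of_pos (hc₂ : Continuous K₂) (ht : 0 < t) :
    ContinuousAt (concat K₁ K₂) t := by
  have hbranch : ContinuousAt (fun s => fR (K₂ (log s))) t :=
    continuous_fR.continuousAt.comp <| hc₂.continuousAt.comp <| continuousAt_log ht.ne'
  exact hbranch.congr <| (eventually_gt_nhds ht).mono fun _ hs => (concat_of_pos hs).symm

section Straight

variable {R : ℝ} (h₁ : ∀ t : ℝ, R ≤ |t| → K₁ t = (t, 0))
  (h₂ : ∀ t : ℝ, R ≤ |t| → K₂ t = (t, 0))
include h₁ h₂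

-- For `t < 0`, `log t = log (-t)`; at `t = 0` the conclusion holds whatever `R` is.
lemma concat_eq_of_le_abs_log (ht : R ≤ |log t|) : concat K₁ K₂ t = (t, 0) := by
  rcases lt_trichotomy t 0 with ht₀ | rfl | ht₀
  · rw [concat_of_neg ht₀, h₁ _ (by rwa [abs_neg, log_neg_eq_log])]
    simp only [fL, neg_neg, exp_log (neg_pos.2 ht₀)]
  · exact concat_zero
  · rw [concat_of_pos ht₀, h₂ _ ht, fR, exp_log ht₀]

lemma concat_eventuallyEq_nhdsNE_zero : concat K₁ K₂ =ᶠ[𝓝[≠] 0] fun t => (t, 0) :=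
  ((tendsto_abs_atBot_atTop.comp tendsto_log_nhdsNE_zero).eventually_ge_atTop R).mono
    fun _ ht => concat_eq_of_le_abs_log h₁ h₂ ht

lemma concat_eventuallyEq_cocompact : concat K₁ K₂ =ᶠ[cocompact ℝ] fun t => (t, 0) :=
  ((tendsto_abs_atTop_atTop.comp (tendsto_log_atTop.comp tendsto_norm_cocompact_atTop)
    ).eventually_ge_atTop R).mono fun t ht => by
      rw [Function.comp_apply, Function.comp_apply, norm_eq_abs, log_abs] at ht
      exact concat_eq_of_le_abs_log h₁ h₂ ht

lemma continuousAt_concat_zero : ContinuousAt (concat K₁ K₂) 0 := by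
  have hline : Tendsto (fun t : ℝ => (t, (0 : ℝ))) (𝓝[≠] 0) (𝓝 (concat K₁ K₂ 0)) :=
    concat_zero (K₁ := K₁) (K₂ := K₂) ▸
      ((continuous_id.prodMk continuous_const).tendsto 0).mono_left nhdsWithin_le_nhds
  exact continuousWithinAt_compl_self.1
    (hline.congr' (concat_eventuallyEq_nhdsNE_zero h₁ h₂).symm)

lemma tendsto_concat_cocompact :
    Tendsto (concat K₁ K₂) (cocompact ℝ) (cocompact (ℝ × ℝ)) := by
  have hline : Isometry fun t : ℝ => (t, (0 : ℝ)) := fun x y => by simp [Prod.edist_eq]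
  exact hline.isClosedEmbedding.tendsto_cocompact.congr'
    (concat_eventuallyEq_cocompact h₁ h₂).symm

end Straight

end

theorem concat_isClosedEmbedding_general (K₁ K₂ : ℝ → ℝ × ℝ)
    (hc₁ : Continuous K₁) (hc₂ : Continuous K₂)
    (hi₁ : Function.Injective K₁) (hi₂ : Function.Injective K₂)
    (R : ℝ)
    (h₁ : ∀ t : ℝ, R ≤ |t| → K₁ t = (t, 0))
    (h₂ : ∀ t : ℝ, R ≤ |t| → K₂ t = (t, 0)) :
    Topology.IsClosedEmbedding (concat K₁ K₂) := by
  have hcont : Continuous (concat K₁ K₂) := continuous_iff_continuousAt.2 fun t => by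
    rcases lt_trichotomy t 0 with ht | rfl | ht
    · exact continuousAt_concat_of_neg hc₁ ht
    · exact continuousAt_concat_zero h₁ h₂
    · exact continuousAt_concat_of_pos hc₂ ht
  have hproper : IsProperMap (concat K₁ K₂) :=
    isProperMap_iff_tendsto_cocompact.2 ⟨hcont, tendsto_concat_cocompact h₁ h₂⟩
  exact .of_continuous_injective_isClosedMap hcont (concat_injective hi₁ hi₂)
    hproper.isClosedMap

/-- The concatenation of continuous injective long maps that coincide with the x-axis
outside a closed ball is a closed topological embedding of `ℝ` into `ℝ²`. -/
theorem concat_isClosedEmbedding (K₁ K₂ : ℝ → ℝ × ℝ)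
    (hc₁ : Continuous K₁) (hc₂ : Continuous K₂)
    (hi₁ : Function.Injective K₁) (hi₂ : Function.Injective K₂)
    (R : ℝ) (hR : 0 < R)
    (h₁ : ∀ t : ℝ, R ≤ |t| → K₁ t = (t, 0))
    (h₂ : ∀ t : ℝ, R ≤ |t| → K₂ t = (t, 0)) :
    Topology.IsClosedEmbedding (concat K₁ K₂) :=
  concat_isClosedEmbedding_general K₁ K₂ hc₁ hc₂ hi₁ hi₂ R h₁ h₂
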